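/- arXiv:1607.06213 — 2 statements merged into one kernel-verified Lean document; each statement's English description precedes it below -/
import Mathlib

section
/- Let X be compact Hausdorff extremally disconnected. Then C⁺(X), the set of continuous functions f : X → S² = ℂ ∪ {∞} with f⁻¹[{∞}] nowhere dense, is closed under pointwise addition and multiplication extended by continuity: for f, g ∈ C⁺(X) there is a unique h ∈ C⁺(X) agreeing with x ↦ f(x)+g(x) on the dense open set where both f(x), g(x) ∈ ℂ. -/
/-!
On the dense open set `D` where `f` and `g` are finite, `f + g` and `f * g` are continuous.
Since `X` is projective among compact Hausdorff spaces (Gleason), the identity of `X` lifts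
through the projection to `X` of the closure of the graph of such a map over `D`; the fibres
of that closure over `D` are single points, so the lift is a continuous extension. It is unique
because `D` is dense, and its `∞`-fibre lies in the nowhere dense set `Dᶜ`.
-/

open OnePoint Set Function

universe u v w

theorem CompactT2.ExtremallyDisconnected.exists_lift {A : Type u} {B : Type v} {C : Type w}
    [TopologicalSpace A] [ExtremallyDisconnected A] [CompactSpace A] [T2Space A]
    [TopologicalSpace B] [CompactSpace B] [T2Space B]
    [TopologicalSpace C] [CompactSpace C] [T2Space C]
    {f : A → C} {g : B → C} (hf : Continuous f) (hg : Continuous g) (hg_surj : Surjective g) :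
    ∃ h : A → B, Continuous h ∧ g ∘ h = f := by
  -- `CompactT2.Projective A` only speaks about spaces in the universe of `A`.
  have : ExtremallyDisconnected (ULift.{max v w} A) :=
    extremallyDisconnected_of_homeo Homeomorph.ulift.symm
  have hg_surj' : Surjective (ULift.up.{max u v} ∘ g ∘ ULift.down.{max u w}) := fun c => by
    obtain ⟨b, hb⟩ := hg_surj c.down
    exact ⟨ULift.up b, by simp [hb]⟩
  obtain ⟨h, hh, hgh⟩ := CompactT2.ExtremallyDisconnected.projective (A := ULift.{max v w} A)
    (continuous_uliftUp.comp (hf.comp continuous_uliftDown))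
    (continuous_uliftUp.comp (hg.comp continuous_uliftDown)) hg_surj'
  refine ⟨ULift.down ∘ h ∘ ULift.up, continuous_uliftDown.comp (hh.comp continuous_uliftUp), ?_⟩
  funext a
  simpa using congrArg ULift.down (congrFun hgh (ULift.up a))

theorem ContinuousOn.eq_of_mem_closure_graph {X Y : Type*} [TopologicalSpace X]
    [TopologicalSpace Y] [T2Space Y] {D : Set X} {φ : X → Y} (hφ : ContinuousOn φ D)
    (hD : IsOpen D) {p : X × Y} (hp : p ∈ closure ((fun x => (x, φ x)) '' D)) (hpD : p.1 ∈ D) :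
    p.2 = φ p.1 := by
  by_contra hne
  have hO : IsOpen (D ×ˢ univ ∩ (fun q : X × Y => (q.2, φ q.1)) ⁻¹' (diagonal Y)ᶜ) :=
    ((continuousOn_snd.prodMk (hφ.comp continuousOn_fst fun _ hq => hq.1))).isOpen_inter_preimage
      (hD.prod isOpen_univ) isClosed_diagonal.isOpen_compl
  obtain ⟨_, ⟨-, hne'⟩, x, -, rfl⟩ := mem_closure_iff.mp hp _ hO ⟨⟨hpD, trivial⟩, hne⟩
  exact hne' rfl

theorem ExtremallyDisconnected.exists_continuous_eqOn {X Y : Type*} [TopologicalSpace X]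
    [CompactSpace X] [T2Space X] [ExtremallyDisconnected X]
    [TopologicalSpace Y] [CompactSpace Y] [T2Space Y]
    {D : Set X} (hDo : IsOpen D) (hDd : Dense D) {φ : X → Y} (hφ : ContinuousOn φ D) :
    ∃ h : X → Y, Continuous h ∧ EqOn h φ D := by
  set Z := closure ((fun x => (x, φ x)) '' D)
  have : CompactSpace Z := isCompact_iff_compactSpace.mp isClosed_closure.isCompact
  have hπ_surj : Surjective fun z : Z => z.1.1 := by
    have hclosed : IsClosed (Prod.fst '' Z) := isClosedMap_fst_of_compactSpace _ isClosed_closure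
    have hD : D ⊆ Prod.fst '' Z := fun x hx => ⟨(x, φ x), subset_closure ⟨x, hx, rfl⟩, rfl⟩
    intro x
    obtain ⟨z, hz, rfl⟩ := hclosed.closure_subset_iff.mpr hD (hDd.closure_eq ▸ mem_univ x)
    exact ⟨⟨z, hz⟩, rfl⟩
  obtain ⟨s, hs, hπs⟩ := CompactT2.ExtremallyDisconnected.exists_lift continuous_id
    (continuous_fst.comp continuous_subtype_val) hπ_surj
  refine ⟨fun x => (s x).1.2, continuous_snd.comp (continuous_subtype_val.comp hs), fun x hx => ?_⟩
  have hsx : (s x).1.1 = x := congrFun hπs x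
  have hsxD : (s x).1.1 ∈ D := by rwa [hsx]
  exact (hφ.eq_of_mem_closure_graph hDo (s x).2 hsxD).trans (congrArg φ hsx)

namespace OnePoint

def map₂ {α β γ : Type*} (op : α → β → γ) (x : OnePoint α) (y : OnePoint β) : OnePoint γ :=
  x.elim ∞ fun a => y.elim ∞ fun b => ↑(op a b)

variable {α β γ : Type*}

@[simp]
theorem map₂_coe_coe (op : α → β → γ) (a : α) (b : β) : map₂ op ↑a ↑b = ↑(op a b) := rfl

theorem continuousAt_map₂_coe_coe [TopologicalSpace α] [TopologicalSpace β] [TopologicalSpace γ]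
    {op : α → β → γ} (hop : Continuous (uncurry op)) (a : α) (b : β) :
    ContinuousAt (uncurry (map₂ op)) (↑a, ↑b) :=
  (isOpenEmbedding_coe.prodMap isOpenEmbedding_coe).continuousAt_iff (x := (a, b)) |>.mp
    (continuous_coe.comp hop).continuousAt

end OnePoint

theorem isOpen_dense_compl_preimage_infty {X α : Type*} [TopologicalSpace X] [TopologicalSpace α]
    {f : X → OnePoint α} (hf : Continuous f) (hf' : IsNowhereDense (f ⁻¹' {∞})) :
    IsOpen (f ⁻¹' {∞})ᶜ ∧ Dense (f ⁻¹' {∞})ᶜ :=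
  isClosed_isNowhereDense_iff_compl.mp ⟨isClosed_infty.preimage hf, hf'⟩

theorem ExtremallyDisconnected.existsUnique_extend_map₂ {X : Type*} [TopologicalSpace X]
    [CompactSpace X] [T2Space X] [ExtremallyDisconnected X] {α β γ : Type*}
    [TopologicalSpace α] [TopologicalSpace β] [TopologicalSpace γ]
    [WeaklyLocallyCompactSpace γ] [T2Space γ]
    {op : α → β → γ} (hop : Continuous (uncurry op))
    {f : X → OnePoint α} {g : X → OnePoint β} (hf : Continuous f) (hg : Continuous g)
    (hf' : IsNowhereDense (f ⁻¹' {∞})) (hg' : IsNowhereDense (g ⁻¹' {∞})) :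
    ∃! h : X → OnePoint γ, Continuous h ∧ IsNowhereDense (h ⁻¹' {∞}) ∧
      ∀ (x : X) (a : α) (b : β), f x = ↑a → g x = ↑b → h x = ↑(op a b) := by
  set D := (f ⁻¹' {∞})ᶜ ∩ (g ⁻¹' {∞})ᶜ
  obtain ⟨hfo, hfd⟩ := isOpen_dense_compl_preimage_infty hf hf'
  obtain ⟨hgo, hgd⟩ := isOpen_dense_compl_preimage_infty hg hg'
  have hDo : IsOpen D := hfo.inter hgo
  have hDd : Dense D := hfd.inter_of_isOpen_left hgd hfo
  have hD_coe : ∀ x ∈ D, ∃ (a : α) (b : β), f x = ↑a ∧ g x = ↑b := fun x ⟨hfx, hgx⟩ => by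
    obtain ⟨a, ha⟩ := ne_infty_iff_exists.mp hfx
    obtain ⟨b, hb⟩ := ne_infty_iff_exists.mp hgx
    exact ⟨a, b, ha.symm, hb.symm⟩
  have hφ : ContinuousOn (fun x => map₂ op (f x) (g x)) D := fun x hx => by
    obtain ⟨a, b, ha, hb⟩ := hD_coe x hx
    refine ContinuousAt.continuousWithinAt ?_
    have := continuousAt_map₂_coe_coe hop a b
    rw [← ha, ← hb] at this
    exact this.comp (f := fun x => (f x, g x)) (hf.prodMk hg).continuousAt
  obtain ⟨h, hh, hhφ⟩ := ExtremallyDisconnected.exists_continuous_eqOn hDo hDd hφ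
  have hval : ∀ (x : X) (a : α) (b : β), f x = ↑a → g x = ↑b → h x = ↑(op a b) :=
    fun x a b ha hb => by
      rw [hhφ ⟨by simp [ha], by simp [hb]⟩]
      simp [ha, hb]
  have hD_compl : IsNowhereDense Dᶜ :=
    (isClosed_isNowhereDense_iff_compl.mpr ⟨by rwa [compl_compl], by rwa [compl_compl]⟩).2
  refine ⟨h, ⟨hh, hD_compl.mono ?_, hval⟩, ?_⟩
  · intro x hx hxD
    obtain ⟨a, b, ha, hb⟩ := hD_coe x hxD
    exact coe_ne_infty _ ((hval x a b ha hb).symm.trans hx)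
  · rintro h' ⟨hh', -, hval'⟩
    refine hh'.ext_on hDd hh fun x hx => ?_
    obtain ⟨a, b, ha, hb⟩ := hD_coe x hx
    rw [hval' x a b ha hb, hval x a b ha hb]

/-- `C⁺(X)` is closed under pointwise addition and multiplication extended by
continuity: for `f, g ∈ C⁺(X)` there is a unique `h ∈ C⁺(X)` agreeing with
`x ↦ f x + g x` (resp. `x ↦ f x * g x`) on the dense open set where both values are
finite. -/
theorem cPlus_closed_under_add_mul
    {X : Type*} [TopologicalSpace X] [CompactSpace X] [T2Space X]
    [ExtremallyDisconnected X]
    (f g : X → OnePoint ℂ) (hf : Continuous f) (hg : Continuous g)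
    (hf' : IsNowhereDense (f ⁻¹' {(∞ : OnePoint ℂ)}))
    (hg' : IsNowhereDense (g ⁻¹' {(∞ : OnePoint ℂ)})) :
    (∃! h : X → OnePoint ℂ,
      Continuous h ∧ IsNowhereDense (h ⁻¹' {(∞ : OnePoint ℂ)}) ∧
      ∀ (x : X) (zf zg : ℂ), f x = OnePoint.some zf → g x = OnePoint.some zg →
        h x = OnePoint.some (zf + zg)) ∧
    (∃! h : X → OnePoint ℂ,
      Continuous h ∧ IsNowhereDense (h ⁻¹' {(∞ : OnePoint ℂ)}) ∧
      ∀ (x : X) (zf zg : ℂ), f x = OnePoint.some zf → g x = OnePoint.some zg →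
        h x = OnePoint.some (zf * zg)) :=
  ⟨ExtremallyDisconnected.existsUnique_extend_map₂ continuous_add hf hg hf' hg',
    ExtremallyDisconnected.existsUnique_extend_map₂ continuous_mul hf hg hf' hg'⟩
end

section
/- Let M be a full B-valued model, φ(x̄) a formula, τ̄ parameters, and a ∈ B. The following are equivalent: (a) ⟦φ(τ̄)⟧ ≥ a; (b) M/G ⊨ φ([τ̄]_G) for all ultrafilters G containing a; (c) the set of ultrafilters G containing a with M/G ⊨ φ([τ̄]_G) is dense in the clopen set O_a of the Stone space. -/
open FirstOrder

/-- A `B`-valued model for a first-order language `L` with domain `M`: a Boolean-valued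
equality, Boolean-valued interpretations of the relation symbols, interpretations of the
function symbols, satisfying the congruence axioms of Boolean-valued models. -/
structure BVStruct (L : Language) (B : Type*) [CompleteBooleanAlgebra B] (M : Type*) where
  eqv : M → M → B
  relMap : ∀ {n : ℕ}, L.Relations n → (Fin n → M) → B
  funMap : ∀ {n : ℕ}, L.Functions n → (Fin n → M) → M
  eqv_refl : ∀ a : M, eqv a a = ⊤
  eqv_symm : ∀ a b : M, eqv a b = eqv b a
  eqv_trans : ∀ a b c : M, eqv a b ⊓ eqv b c ≤ eqv a c
  rel_congr : ∀ {n : ℕ} (R : L.Relations n) (x y : Fin n → M),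
    (⨅ i, eqv (x i) (y i)) ⊓ relMap R x ≤ relMap R y
  fun_congr : ∀ {n : ℕ} (F : L.Functions n) (x y : Fin n → M),
    (⨅ i, eqv (x i) (y i)) ≤ eqv (funMap F x) (funMap F y)

namespace BVStruct

variable {L : Language} {B M : Type*} [CompleteBooleanAlgebra B]

/-- Evaluation of a term in a `B`-valued model. -/
def realizeTerm (S : BVStruct L B M) {α : Type*} (v : α → M) : L.Term α → M
  | .var a => v a
  | .func F ts => S.funMap F fun i => S.realizeTerm v (ts i)

/-- The Boolean value of a bounded formula in a `B`-valued model, with free variables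
interpreted by `v` and bound ones by `xs`. -/
def val (S : BVStruct L B M) {α : Type*} :
    ∀ {n : ℕ}, L.BoundedFormula α n → (α → M) → (Fin n → M) → B
  | _, .falsum, _, _ => ⊥
  | _, .equal t₁ t₂, v, xs =>
      S.eqv (S.realizeTerm (Sum.elim v xs) t₁) (S.realizeTerm (Sum.elim v xs) t₂)
  | _, .rel R ts, v, xs => S.relMap R fun i => S.realizeTerm (Sum.elim v xs) (ts i)
  | _, .imp φ ψ, v, xs => S.val φ v xs ⇨ S.val ψ v xs
  | _, .all φ, v, xs => ⨅ a : M, S.val φ v (Fin.snoc xs a)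

/-- The Boolean value of a sentence. -/
def sval (S : BVStruct L B M) (φ : L.Sentence) : B :=
  S.val φ Empty.elim (fun i => i.elim0)

end BVStruct

/-- An ultrafilter on a Boolean algebra `B`. -/
structure BoolUltrafilter (B : Type*) [BooleanAlgebra B] where
  carrier : Set B
  top_mem : ⊤ ∈ carrier
  bot_not_mem : ⊥ ∉ carrier
  inf_mem : ∀ a b : B, a ∈ carrier → b ∈ carrier → a ⊓ b ∈ carrier
  mem_of_le : ∀ a b : B, a ∈ carrier → a ≤ b → b ∈ carrier
  mem_or_compl_mem : ∀ a : B, a ∈ carrier ∨ aᶜ ∈ carrier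

namespace BVStruct

variable {L : FirstOrder.Language} {B M : Type*} [CompleteBooleanAlgebra B]

/-- The equivalence `τ ≡_G σ ↔ ⟦τ = σ⟧ ∈ G` used to form the quotient `M/G`. -/
def bvSetoid (S : BVStruct L B M) (G : BoolUltrafilter B) : Setoid M where
  r τ σ := S.eqv τ σ ∈ G.carrier
  iseqv := by
    refine ⟨fun τ => ?_, fun {τ σ} h => ?_, fun {τ σ χ} h₁ h₂ => ?_⟩
    · rw [S.eqv_refl]; exact G.top_mem
    · rw [S.eqv_symm]; exact h
    · exact G.mem_of_le _ _ (G.inf_mem _ _ h₁ h₂) (S.eqv_trans _ _ _)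

/-- The quotient structure `M/G`: relations hold iff their Boolean value (at chosen
representatives) lies in `G`, functions are computed on representatives. -/
noncomputable def quotStruct (S : BVStruct L B M) (G : BoolUltrafilter B) :
    FirstOrder.Language.Structure L (Quotient (S.bvSetoid G)) where
  funMap := fun {_} F qs => Quotient.mk (S.bvSetoid G) (S.funMap F fun i => (qs i).out)
  RelMap := fun {_} R qs => S.relMap R (fun i => (qs i).out) ∈ G.carrier

/-- A `B`-valued model is full if every existential Boolean value is attained. -/
def IsFull (S : BVStruct L B M) : Prop :=
  ∀ (n : ℕ) (φ : L.BoundedFormula Empty (n + 1)) (xs : Fin n → M),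
    ∃ σ : M, S.val φ.ex Empty.elim xs = S.val φ Empty.elim (Fin.snoc xs σ)

end BVStruct
/-- The basic clopen set `O_b` of the Stone space of `B`. -/
def basicOpen {B : Type*} [BooleanAlgebra B] (b : B) : Set (BoolUltrafilter B) :=
  {G | b ∈ G.carrier}

/-- The Stone topology, generated by the basic clopen sets. -/
instance stoneTopology (B : Type*) [BooleanAlgebra B] :
    TopologicalSpace (BoolUltrafilter B) :=
  TopologicalSpace.generateFrom {S | ∃ b : B, S = basicOpen b}

/-- Satisfaction of `φ([τ]_G)` in the quotient `M/G`. -/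
def satAt {L : FirstOrder.Language} {B M : Type*} [CompleteBooleanAlgebra B]
    (S : BVStruct L B M) (G : BoolUltrafilter B) {n : ℕ}
    (φ : L.BoundedFormula Empty n) (τ : Fin n → M) : Prop :=
  letI : FirstOrder.Language.Structure L (Quotient (S.bvSetoid G)) := S.quotStruct G;
  φ.Realize Empty.elim (fun i => Quotient.mk (S.bvSetoid G) (τ i))

/-!
Łoś's theorem for full models: `M/G ⊨ φ([τ]_G)` iff `⟦φ(τ)⟧ ∈ G`. Ultrafilters only commute with
finite meets, so the `∀` step needs fullness: the infimum `⨅ σ, ⟦φ(τ, σ)⟧` is attained at a witness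
of `∃ x, ¬φ(τ, x)`. With this, (a) ⇔ (b) is the fact that ultrafilters separate the elements of `B`
(the prime ideal theorem), and (b) ⇔ (c) holds because `O_b` is clopen, so the closure of
`O_a ∩ O_b` stays inside `O_b`.
-/

namespace BoolUltrafilter

section BooleanAlgebra

variable {B : Type*} [BooleanAlgebra B] (G : BoolUltrafilter B)

lemma compl_mem_iff {a : B} : aᶜ ∈ G.carrier ↔ a ∉ G.carrier := by
  refine ⟨fun hc ha => G.bot_not_mem ?_, (G.mem_or_compl_mem a).resolve_left⟩
  simpa using G.inf_mem a aᶜ ha hc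

lemma himp_mem_iff {a b : B} : a ⇨ b ∈ G.carrier ↔ (a ∈ G.carrier → b ∈ G.carrier) := by
  refine ⟨fun h ha => G.mem_of_le _ _ (G.inf_mem _ _ ha h) inf_himp_le, fun h => ?_⟩
  by_cases ha : a ∈ G.carrier
  · exact G.mem_of_le _ _ (h ha) le_himp
  · exact G.mem_of_le _ _ (G.compl_mem_iff.2 ha) compl_le_himp

def ofIsPrime (J : Order.Ideal B) (hJ : J.IsPrime) : BoolUltrafilter B where
  carrier := (J : Set B)ᶜ
  top_mem := hJ.top_notMem
  bot_not_mem := not_not.2 J.bot_mem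
  inf_mem a b ha hb hab := (hJ.mem_or_mem hab).elim ha hb
  mem_of_le a b ha hab hb := ha (J.lower hab hb)
  mem_or_compl_mem a := by
    by_contra! h
    exact hJ.top_notMem (sup_compl_eq_top (x := a) ▸ J.sup_mem (not_not.1 h.1) (not_not.1 h.2))

lemma exists_mem_of_ne_bot {b : B} (hb : b ≠ ⊥) : ∃ G : BoolUltrafilter B, b ∈ G.carrier := by
  have hdisj :
      Disjoint (Order.PFilter.principal b : Set B) (Order.Ideal.principal (⊥ : B) : Set B) :=
    Set.disjoint_left.2 fun x hbx hx => hb <| le_bot_iff.1 <|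
      (Order.PFilter.mem_principal.1 hbx).trans (Order.Ideal.mem_principal.1 hx)
  obtain ⟨J, hJ, -, hJb⟩ := DistribLattice.prime_ideal_of_disjoint_filter_ideal hdisj
  exact ⟨ofIsPrime J hJ, Set.disjoint_left.1 hJb (le_refl b)⟩

end BooleanAlgebra

lemma iInf_mem {B : Type*} [CompleteBooleanAlgebra B] (G : BoolUltrafilter B) {ι : Type*}
    [Fintype ι] {f : ι → B} (h : ∀ i, f i ∈ G.carrier) : (⨅ i, f i) ∈ G.carrier := by
  rw [← Finset.inf_univ_eq_iInf]
  exact Finset.inf_mem G.carrier G.top_mem (fun x hx y hy => G.inf_mem x y hx hy) _ _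
    fun i _ => h i

end BoolUltrafilter

section Stone

variable {B : Type*} [BooleanAlgebra B]

lemma basicOpen_subset_basicOpen_iff {a b : B} : basicOpen a ⊆ basicOpen b ↔ a ≤ b := by
  refine ⟨fun h => ?_, fun hab G ha => G.mem_of_le _ _ ha hab⟩
  by_contra hab
  obtain ⟨G, hG⟩ := BoolUltrafilter.exists_mem_of_ne_bot (b := a ⊓ bᶜ)
    fun h0 => hab (disjoint_compl_right_iff.1 (disjoint_iff.2 h0))
  exact G.compl_mem_iff.1 (G.mem_of_le _ _ hG inf_le_right) (h (G.mem_of_le _ _ hG inf_le_left))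

lemma isOpen_basicOpen (b : B) : IsOpen (basicOpen b) :=
  TopologicalSpace.GenerateOpen.basic _ ⟨b, rfl⟩

lemma isClosed_basicOpen (b : B) : IsClosed (basicOpen b) := by
  have : (basicOpen b)ᶜ = basicOpen bᶜ := Set.ext fun G => G.compl_mem_iff.symm
  exact isOpen_compl_iff.1 (this ▸ isOpen_basicOpen bᶜ)

lemma basicOpen_subset_closure_inter_iff {a b : B} :
    basicOpen a ⊆ closure (basicOpen a ∩ basicOpen b) ↔ basicOpen a ⊆ basicOpen b :=
  ⟨fun h => h.trans (closure_minimal Set.inter_subset_right (isClosed_basicOpen b)),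
    fun h => (Set.subset_inter subset_rfl h).trans subset_closure⟩

end Stone

namespace BVStruct

variable {L : Language} {B M : Type*} [CompleteBooleanAlgebra B] (S : BVStruct L B M)
  (G : BoolUltrafilter B)

lemma relMap_mem_of_eqv_mem {m : ℕ} (R : L.Relations m) {x y : Fin m → M}
    (h : ∀ i, S.eqv (x i) (y i) ∈ G.carrier) (hx : S.relMap R x ∈ G.carrier) :
    S.relMap R y ∈ G.carrier :=
  G.mem_of_le _ _ (G.inf_mem _ _ (G.iInf_mem h) hx) (S.rel_congr R x y)

lemma eqv_out_mk (x : M) : S.eqv (Quotient.mk (S.bvSetoid G) x).out x ∈ G.carrier :=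
  Quotient.mk_out (s := S.bvSetoid G) x

lemma realize_mk {α : Type*} (v : α → M) (t : L.Term α) :
    letI := S.quotStruct G
    t.realize (fun a => Quotient.mk (S.bvSetoid G) (v a))
      = Quotient.mk (S.bvSetoid G) (S.realizeTerm v t) := by
  let _ := S.quotStruct G
  induction t with
  | var a => rfl
  | func F ts ih =>
    show Language.Structure.funMap F (fun i => (ts i).realize _) = _
    simp only [ih]
    exact Quotient.sound <|
      G.mem_of_le _ _ (G.iInf_mem fun i => S.eqv_out_mk G _) (S.fun_congr F _ _)

lemma relMap_mk_iff {m : ℕ} (R : L.Relations m) (x : Fin m → M) :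
    letI := S.quotStruct G
    Language.Structure.RelMap R (fun i => Quotient.mk (S.bvSetoid G) (x i)) ↔
      S.relMap R x ∈ G.carrier :=
  ⟨S.relMap_mem_of_eqv_mem G R fun i => S.eqv_out_mk G (x i),
    S.relMap_mem_of_eqv_mem G R fun i => S.eqv_symm _ _ ▸ S.eqv_out_mk G (x i)⟩

lemma val_not {α : Type*} {k : ℕ} (φ : L.BoundedFormula α k) (v : α → M) (xs : Fin k → M) :
    S.val φ.not v xs = (S.val φ v xs)ᶜ :=
  himp_bot _

variable {S} in
lemma IsFull.exists_iInf_val_eq (hfull : S.IsFull) {k : ℕ} (φ : L.BoundedFormula Empty (k + 1))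
    (xs : Fin k → M) :
    ∃ σ, ⨅ σ', S.val φ Empty.elim (Fin.snoc xs σ') = S.val φ Empty.elim (Fin.snoc xs σ) := by
  obtain ⟨σ, hσ⟩ := hfull k φ.not xs
  refine ⟨σ, compl_injective ?_⟩
  rw [← S.val_not, ← hσ]
  show _ = S.val φ.not.not.all.not Empty.elim xs
  simp only [val, himp_bot, compl_compl]

variable {S} in
theorem satAt_iff_val_mem (hfull : S.IsFull) {k : ℕ} (φ : L.BoundedFormula Empty k)
    (xs : Fin k → M) : satAt S G φ xs ↔ S.val φ Empty.elim xs ∈ G.carrier := by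
  let _ := S.quotStruct G
  have elim_mk : ∀ {k} (xs : Fin k → M),
      Sum.elim (Empty.elim : Empty → Quotient (S.bvSetoid G))
        (fun i => Quotient.mk (S.bvSetoid G) (xs i))
        = fun s => Quotient.mk (S.bvSetoid G) (Sum.elim Empty.elim xs s) :=
    fun _ => funext (Sum.rec (fun e => e.elim) fun _ => rfl)
  induction φ with
  | falsum => exact ⟨False.elim, fun h => absurd h G.bot_not_mem⟩
  | equal t₁ t₂ =>
    show Language.Term.realize _ t₁ = Language.Term.realize _ t₂ ↔ _
    rw [elim_mk, S.realize_mk, S.realize_mk]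
    exact Quotient.eq
  | rel R ts =>
    show Language.Structure.RelMap R (fun i => Language.Term.realize _ (ts i)) ↔ _
    simp only [elim_mk, S.realize_mk]
    exact S.relMap_mk_iff G R _
  | imp φ ψ ihφ ihψ =>
    exact (imp_congr (ihφ xs) (ihψ xs)).trans G.himp_mem_iff.symm
  | all φ ih =>
    have sat_snoc : ∀ σ, satAt S G φ (Fin.snoc xs σ) ↔
        φ.Realize Empty.elim (Fin.snoc (fun i => Quotient.mk (S.bvSetoid G) (xs i))
          (Quotient.mk (S.bvSetoid G) σ)) := by
      intro σ
      show φ.Realize Empty.elim (Quotient.mk _ ∘ Fin.snoc xs σ) ↔ _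
      rw [Fin.comp_snoc]
      rfl
    obtain ⟨σ, hσ⟩ := hfull.exists_iInf_val_eq φ xs
    show (∀ q, φ.Realize Empty.elim (Fin.snoc _ q)) ↔
      (⨅ σ', S.val φ Empty.elim (Fin.snoc xs σ')) ∈ G.carrier
    refine ⟨fun h => hσ ▸ (ih _).1 ((sat_snoc σ).2 (h _)), fun h q => ?_⟩
    induction q using Quotient.inductionOn with | h σ' => ?_
    exact (sat_snoc σ').1 ((ih _).2 (G.mem_of_le _ _ h (iInf_le _ σ')))

end BVStruct

/-- For a full `B`-valued model `S`, a formula `φ`, parameters `τ` and `a ∈ B`, the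
following are equivalent: (a) `⟦φ(τ)⟧ ≥ a`; (b) `M/G ⊨ φ([τ]_G)` for every ultrafilter
`G` containing `a`; (c) the set of such `G` satisfying `φ` is (topologically) dense in
the clopen set `O_a` of the Stone space of `B`. -/
theorem bv_value_ge_iff_forall_iff_dense
    {L : FirstOrder.Language} {B M : Type*} [CompleteBooleanAlgebra B]
    (S : BVStruct L B M) (hfull : S.IsFull) (a : B)
    (n : ℕ) (φ : L.BoundedFormula Empty n) (τ : Fin n → M) :
    (a ≤ S.val φ Empty.elim τ ↔
      ∀ G : BoolUltrafilter B, a ∈ G.carrier → satAt S G φ τ) ∧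
    ((∀ G : BoolUltrafilter B, a ∈ G.carrier → satAt S G φ τ) ↔
      basicOpen a ⊆ closure {G : BoolUltrafilter B | a ∈ G.carrier ∧ satAt S G φ τ}) := by
  have hsat (G : BoolUltrafilter B) : satAt S G φ τ ↔ G ∈ basicOpen (S.val φ Empty.elim τ) :=
    BVStruct.satAt_iff_val_mem G hfull φ τ
  have hforall : (∀ G : BoolUltrafilter B, a ∈ G.carrier → satAt S G φ τ) ↔
      basicOpen a ⊆ basicOpen (S.val φ Empty.elim τ) :=
    forall₂_congr fun G _ => hsat G
  have hset : {G : BoolUltrafilter B | a ∈ G.carrier ∧ satAt S G φ τ} =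
      basicOpen a ∩ basicOpen (S.val φ Empty.elim τ) :=
    Set.ext fun G => and_congr_right' (hsat G)
  rw [hforall, hset, basicOpen_subset_closure_inter_iff, basicOpen_subset_basicOpen_iff]
  exact ⟨Iff.rfl, Iff.rfl⟩
end
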